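/- arXiv:1108.2083 — 6 statements merged into one kernel-verified Lean document; each statement's English description precedes it below -/
import Mathlib

section
/- Let R be a ring, M an R-module, N a direct summand of M, and A a submodule of N. Then A is PSD in M if and only if A is PSD in N. -/
open Submodule Function LinearMap

universe u v w x y

section Defs

variable (R : Type u) [Ring R]

/-- `I` (a left ideal) is a two-sided ideal. -/
def IsTwoSidedI (I : Ideal R) : Prop := ∀ a b : R, a ∈ I → a * b ∈ I

variable {M : Type v} [AddCommGroup M] [Module R M]

/-- `N` is PSD in the submodule `T` of `M` (taking `T = ⊤` gives "PSD in `M`"):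
whenever `N + X = T`, there is a projective direct summand `S` of `T` with `S ≤ N`
and `T = S ⊕ X`. -/
def PSDIn (T N : Submodule R M) : Prop :=
  ∀ X : Submodule R M, X ≤ T → N ⊔ X = T →
    ∃ S : Submodule R M, Module.Projective R S ∧ S ≤ N ∧ S ⊔ X = T ∧ S ⊓ X = ⊥

/-- `M` is PSD for the ideal `I`: every submodule of `IM` is PSD in `M`. -/
def PSDFor (I : Ideal R) (M : Type v) [AddCommGroup M] [Module R M] : Prop :=
  ∀ N : Submodule R M, N ≤ I • (⊤ : Submodule R M) → PSDIn R ⊤ N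

/-- `R` is a left PSD ring for `I`: every finitely generated free left `R`-module is PSD for `I`. -/
def PSDRing (I : Ideal R) : Prop :=
  ∀ (F : Type u) [AddCommGroup F] [Module R F] [Module.Free R F] [Module.Finite R F],
    PSDFor R I F

/-- `f : P → M` is a projective `I`-cover. -/
def IsProjICover (I : Ideal R) {P : Type w} [AddCommGroup P] [Module R P]
    (f : P →ₗ[R] M) : Prop :=
  Surjective f ∧ Module.Projective R P ∧
    LinearMap.ker f ≤ I • (⊤ : Submodule R P) ∧ PSDIn R ⊤ (LinearMap.ker f)

/-- A projective `I`-cover of `M`. -/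
structure ProjICover (I : Ideal R) (M : Type v) [AddCommGroup M] [Module R M] where
  P : Type w
  [addP : AddCommGroup P]
  [modP : Module R P]
  f : P →ₗ[R] M
  cover : IsProjICover R I f

/-- `R` is `I`-semiregular. -/
def ISemiregular (I : Ideal R) : Prop :=
  ∀ a : R, ∃ P Q : Submodule R R, IsCompl P Q ∧ Module.Projective R P ∧
    P ≤ Submodule.span R {a} ∧ Submodule.span R {a} ⊓ Q ≤ I

/-- `R` is `I`-semiperfect. -/
def ISemiperfect (I : Ideal R) : Prop :=
  ∀ K : Submodule R R, ∃ A B : Submodule R R, IsCompl A B ∧ Module.Projective R A ∧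
    A ≤ K ∧ K ⊓ B ≤ I

end Defs




section Defs2

variable (R : Type u) [Ring R]
variable {M : Type v} [AddCommGroup M] [Module R M]

/-- A submodule `S` is small in the submodule `T` (take `T = ⊤` for "small in `M`"). -/
def SmallIn (T S : Submodule R M) : Prop :=
  ∀ X : Submodule R M, X ≤ T → S ⊔ X = T → X = T

/-- `K` is DM in the submodule `T` of `M`: whenever `K + X = T` there is a direct
summand `S` of `T` with `S ≤ K` and `S + X = T`. -/
def DMIn (T K : Submodule R M) : Prop :=
  ∀ X : Submodule R M, X ≤ T → K ⊔ X = T →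
    ∃ S : Submodule R M, S ≤ K ∧ (∃ S' : Submodule R M, S ⊔ S' = T ∧ S ⊓ S' = ⊥) ∧ S ⊔ X = T

/-- `M` is DM for `I`: every submodule of `IM` is DM in `M`. -/
def DMFor (I : Ideal R) (M : Type v) [AddCommGroup M] [Module R M] : Prop :=
  ∀ K : Submodule R M, K ≤ I • (⊤ : Submodule R M) → DMIn R ⊤ K

/-- `R` is a left DM ring for `I`. -/
def DMRing (I : Ideal R) : Prop :=
  ∀ (F : Type u) [AddCommGroup F] [Module R F] [Module.Free R F] [Module.Finite R F],
    DMFor R I F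

/-- `M` is an `I`-supplemented module. -/
def ISupplemented (I : Ideal R) (M : Type v) [AddCommGroup M] [Module R M] : Prop :=
  ∀ X : Submodule R M, ∃ Y : Submodule R M, Module.Projective R Y ∧ X ⊔ Y = ⊤ ∧
    X ⊓ Y ≤ I • Y ∧ DMIn R Y (X ⊓ Y)

/-- `M` is a finitely `I`-supplemented module. -/
def FinISupplemented (I : Ideal R) (M : Type v) [AddCommGroup M] [Module R M] : Prop :=
  ∀ X : Submodule R M, X.FG → ∃ Y : Submodule R M, Module.Projective R Y ∧ X ⊔ Y = ⊤ ∧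
    X ⊓ Y ≤ I • Y ∧ DMIn R Y (X ⊓ Y)

/-- `M` is a supplemented module. -/
def Supplemented (M : Type v) [AddCommGroup M] [Module R M] : Prop :=
  ∀ X : Submodule R M, ∃ Y : Submodule R M, X ⊔ Y = ⊤ ∧ SmallIn R Y (X ⊓ Y)

/-- `M` is an `I`-semiperfect module. -/
def ISemiperfectMod (I : Ideal R) (M : Type v) [AddCommGroup M] [Module R M] : Prop :=
  ∀ K : Submodule R M, ∃ A B : Submodule R M, IsCompl A B ∧ Module.Projective R A ∧
    A ≤ K ∧ K ⊓ B ≤ I • (⊤ : Submodule R M)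

/-- The radical of `M`: the intersection of all maximal submodules. -/
def RadM (M : Type v) [AddCommGroup M] [Module R M] : Submodule R M :=
  sInf {N : Submodule R M | IsCoatom N}

/-- The socle of `M`: the sum of all simple submodules. -/
def SocM (M : Type v) [AddCommGroup M] [Module R M] : Submodule R M :=
  sSup {N : Submodule R M | IsSimpleModule R N}

/-- `P` is locally projective (lifting version). -/
def LocallyProjective (P : Type w) [AddCommGroup P] [Module R P] : Prop :=
  ∀ (A : Type x) (B : Type y) [AddCommGroup A] [Module R A] [AddCommGroup B] [Module R B]
    (g : A →ₗ[R] B) (f : P →ₗ[R] B), Surjective g →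
      ∀ P₀ : Submodule R P, P₀.FG → ∃ h : P →ₗ[R] A, ∀ p ∈ P₀, f p = g (h p)

/-- `P` is locally projective (splitting version). -/
def LocallyProjectiveB (P : Type w) [AddCommGroup P] [Module R P] : Prop :=
  ∀ (N : Type x) [AddCommGroup N] [Module R N] (g : N →ₗ[R] P), Surjective g →
    ∀ P₀ : Submodule R P, P₀.FG → ∃ h : P →ₗ[R] N, ∀ p ∈ P₀, g (h p) = p


/-- A locally projective `I`-cover of `M`. -/
structure LocProjICover (I : Ideal R) (M : Type v) [AddCommGroup M] [Module R M] where
  P : Type w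
  [addP : AddCommGroup P]
  [modP : Module R P]
  f : P →ₗ[R] M
  surj : Surjective f
  locProj : LocallyProjective.{u, w, x, y} R P
  ker_le : LinearMap.ker f ≤ I • (⊤ : Submodule R P)
  psd : PSDIn R ⊤ (LinearMap.ker f)

/-- A locally projective cover of `M`. -/
structure LocProjCover (M : Type v) [AddCommGroup M] [Module R M] where
  P : Type w
  [addP : AddCommGroup P]
  [modP : Module R P]
  f : P →ₗ[R] M
  surj : Surjective f
  locProj : LocallyProjective.{u, w, x, y} R P
  ker_small : SmallIn R ⊤ (LinearMap.ker f)

/-- A projective cover of `M`. -/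
structure ProjCover (M : Type v) [AddCommGroup M] [Module R M] where
  P : Type w
  [addP : AddCommGroup P]
  [modP : Module R P]
  f : P →ₗ[R] M
  surj : Surjective f
  proj : Module.Projective R P
  ker_small : SmallIn R ⊤ (LinearMap.ker f)

/-- `M` is self-projective (quasi-projective). -/
def SelfProjective (M : Type v) [AddCommGroup M] [Module R M] : Prop :=
  ∀ (K : Submodule R M) (f : M →ₗ[R] M ⧸ K), ∃ h : M →ₗ[R] M, K.mkQ ∘ₗ h = f

/-- A projectivity class of `R`-modules (in a fixed universe). -/
def ProjectivityClass
    (Pc : ∀ (N : Type w) [AddCommGroup N] [Module R N], Prop) : Prop :=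
  (∀ (N : Type w) [AddCommGroup N] [Module R N], SelfProjective R N → Pc N) ∧
  (∀ (N P : Type w) [AddCommGroup N] [Module R N] [AddCommGroup P] [Module R P]
      (f : P →ₗ[R] N), Surjective f → Module.Projective R P → Pc (P × N) →
        Module.Projective R N)

/-- `Pc` is closed under direct summands. -/
def ClosedUnderSummands
    (Pc : ∀ (N : Type w) [AddCommGroup N] [Module R N], Prop) : Prop :=
  ∀ (N P : Type w) [AddCommGroup N] [Module R N] [AddCommGroup P] [Module R P],
    Pc P → ∀ (i : N →ₗ[R] P) (p : P →ₗ[R] N), p ∘ₗ i = LinearMap.id → Pc N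

/-- A `Pc`-projective `I`-cover of `M`. -/
structure PProjICover (Pc : ∀ (N : Type w) [AddCommGroup N] [Module R N], Prop)
    (I : Ideal R) (M : Type v) [AddCommGroup M] [Module R M] where
  Q : Type w
  [addQ : AddCommGroup Q]
  [modQ : Module R Q]
  g : Q →ₗ[R] M
  surj : Surjective g
  memP : Pc Q
  ker_le : LinearMap.ker g ≤ I • (⊤ : Submodule R Q)
  psd : PSDIn R ⊤ (LinearMap.ker g)

end Defs2

/-! The transfer is modular-lattice arithmetic on submodules. A supplement `X` of `A` in `N`
becomes the supplement `X ⊔ N'` of `A` in `M`, and a supplement `X` of `A` in `M` is cut down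
to the supplement `N ⊓ X` of `A` in `N`; in both cases the modular law carries the summand `S`
produced on one side back to the other. -/

namespace PSDIn

variable {R : Type u} [Ring R] {M : Type v} [AddCommGroup M] [Module R M]
  {T N A : Submodule R M}

theorem mono_ambient (hNT : N ≤ T) (hAN : A ≤ N) (h : PSDIn R N A) : PSDIn R T A := by
  intro X hXT hAX
  have hNX : N ⊔ X = T := le_antisymm (sup_le hNT hXT) (hAX ▸ sup_le_sup_right hAN X)
  obtain ⟨S, hSproj, hSA, hSsup, hSinf⟩ := h (N ⊓ X) inf_le_left (by
    rw [inf_comm, ← sup_inf_assoc_of_le X hAN, hAX, inf_eq_right.mpr hNT])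
  have hSN : S ≤ N := hSA.trans hAN
  refine ⟨S, hSproj, hSA, le_antisymm (sup_le (hSN.trans hNT) hXT) ?_, ?_⟩
  · calc T = S ⊔ (N ⊓ X) ⊔ X := by rw [hSsup, hNX]
      _ ≤ S ⊔ X := sup_le (sup_le_sup_left inf_le_right S) le_sup_right
  · rw [← hSinf, ← inf_assoc, inf_eq_left.mpr hSN]

theorem restrict_of_sup_eq_of_inf_eq_bot {N' : Submodule R M} (hsup : N ⊔ N' = T)
    (hinf : N ⊓ N' = ⊥) (hAN : A ≤ N) (h : PSDIn R T A) : PSDIn R N A := by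
  have hNT : N ≤ T := hsup ▸ le_sup_left
  intro X hXN hAX
  obtain ⟨S, hSproj, hSA, hSsup, hSinf⟩ := h (X ⊔ N')
    (sup_le (hXN.trans hNT) (hsup ▸ le_sup_right))
    (by rw [← sup_assoc, hAX, hsup])
  refine ⟨S, hSproj, hSA, ?_, eq_bot_iff.mpr (hSinf ▸ inf_le_inf_left S le_sup_left)⟩
  calc S ⊔ X = S ⊔ X ⊔ N ⊓ N' := by rw [hinf, sup_bot_eq]
    _ = (S ⊔ X ⊔ N') ⊓ N := by
      rw [inf_comm N, sup_inf_assoc_of_le N' (sup_le (hSA.trans hAN) hXN), inf_comm]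
    _ = N := by rw [sup_assoc, hSsup, inf_eq_right.mpr hNT]

end PSDIn

theorem stmt0 {R : Type u} [Ring R] {M : Type v} [AddCommGroup M] [Module R M]
    (N : Submodule R M) (hN : ∃ N' : Submodule R M, IsCompl N N')
    (A : Submodule R M) (hA : A ≤ N) :
    PSDIn R ⊤ A ↔ PSDIn R N A := by
  obtain ⟨N', hc⟩ := hN
  exact ⟨PSDIn.restrict_of_sup_eq_of_inf_eq_bot hc.sup_eq_top hc.inf_eq_bot hA,
    PSDIn.mono_ambient le_top hA⟩
end

section
/- A ring R is a left PSD ring for an ideal I if and only if every finitely generated projective left R-module is PSD for I. -/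
open Submodule Function LinearMap

universe u v w x y

/-
A finitely generated projective module `P` is a direct summand of some `Rⁿ`, via a retraction
`f : Rⁿ → P` with section `s`. Given `N ≤ IP` with `N + X = P`, the submodule `s(N) ≤ IRⁿ`
supplements `f⁻¹(X)` in `Rⁿ`, so the PSD property of `Rⁿ` provides a projective complement `S'` of
`f⁻¹(X)` inside `s(N)`. As `S'` meets `ker f ≤ f⁻¹(X)` trivially, `f` maps it isomorphically onto
a complement `f(S') ≤ N` of `X`.
-/

section Retract

variable {R : Type u} [Ring R] {F : Type v} {P : Type w}
  [AddCommGroup F] [Module R F] [AddCommGroup P] [Module R P]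

theorem Module.Projective.map_of_disjoint_ker {S : Submodule R F} [Module.Projective R S]
    {f : F →ₗ[R] P} (h : Disjoint S (LinearMap.ker f)) : Module.Projective R (S.map f) :=
  Module.Projective.of_equiv <|
    (LinearEquiv.ofInjective (f.domRestrict S) (injective_domRestrict_iff.mpr h)).trans
      (LinearEquiv.ofEq _ _ (range_domRestrict S f))

theorem PSDIn.of_map_section {f : F →ₗ[R] P} {s : P →ₗ[R] F} (hfs : f ∘ₗ s = LinearMap.id)
    {N : Submodule R P} (hN : PSDIn R ⊤ (N.map s)) : PSDIn R ⊤ N := by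
  have hfs' : ∀ p, f (s p) = p := LinearMap.congr_fun hfs
  have hf : Surjective f := fun p => ⟨s p, hfs' p⟩
  intro X _ hNX
  have hsup : N.map s ⊔ X.comap f = ⊤ := by
    refine eq_top_iff.mpr fun x _ => ?_
    have hx : f x ∈ N ⊔ X := hNX ▸ Submodule.mem_top
    obtain ⟨n, hn, y, hy, hxy⟩ := Submodule.mem_sup.mp hx
    have hrest : x - s n ∈ X.comap f := by
      simpa [Submodule.mem_comap, hfs', ← hxy] using hy
    simpa using Submodule.add_mem_sup (Submodule.mem_map_of_mem (f := s) hn) hrest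
  obtain ⟨S', hS'proj, hS'N, hS'sup, hS'inf⟩ := hN (X.comap f) le_top hsup
  have hS'ker : Disjoint S' (LinearMap.ker f) :=
    (disjoint_iff.mpr hS'inf).mono_right (LinearMap.ker_le_comap f)
  refine ⟨S'.map f, Module.Projective.map_of_disjoint_ker hS'ker, ?_, ?_, ?_⟩
  · calc S'.map f ≤ (N.map s).map f := Submodule.map_mono hS'N
      _ = N := by rw [← Submodule.map_comp, hfs, Submodule.map_id]
  · rw [← Submodule.map_comap_eq_of_surjective hf X, ← Submodule.map_sup, hS'sup,
      Submodule.map_top, LinearMap.range_eq_top.mpr hf]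
  · refine (Submodule.eq_bot_iff _).mpr ?_
    rintro _ ⟨⟨x, hxS', rfl⟩, hfx⟩
    have hx : x ∈ S' ⊓ X.comap f := ⟨hxS', hfx⟩
    rw [hS'inf, Submodule.mem_bot] at hx
    rw [hx, map_zero]

theorem PSDFor.of_retraction {I : Ideal R} (hF : PSDFor R I F) (f : F →ₗ[R] P) (s : P →ₗ[R] F)
    (hfs : f ∘ₗ s = LinearMap.id) : PSDFor R I P := fun N hN =>
  PSDIn.of_map_section hfs <| hF _ <|
    calc N.map s ≤ (I • ⊤ : Submodule R P).map s := Submodule.map_mono hN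
      _ = I • (⊤ : Submodule R P).map s := Submodule.map_smul'' I ⊤ s
      _ ≤ I • ⊤ := Submodule.smul_mono le_rfl le_top

end Retract

theorem stmt2_general {R : Type u} [Ring R] (I : Ideal R) :
    PSDRing R I ↔
      ∀ (P : Type u) [AddCommGroup P] [Module R P] [Module.Finite R P]
        [Module.Projective R P], PSDFor R I P := by
  refine ⟨fun h P _ _ _ _ => ?_, fun h F _ _ _ _ => h F⟩
  obtain ⟨n, f, hf⟩ := Module.Finite.exists_fin' R P
  obtain ⟨s, hs⟩ := Module.projective_lifting_property f LinearMap.id hf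
  exact (h (Fin n → R)).of_retraction f s hs

theorem stmt2 {R : Type u} [Ring R] (I : Ideal R) (hI : IsTwoSidedI R I) :
    PSDRing R I ↔
      ∀ (P : Type u) [AddCommGroup P] [Module R P] [Module.Finite R P]
        [Module.Projective R P], PSDFor R I P :=
  stmt2_general I
end

section
/- Let M = M₁ ⊕ M₂ be a direct sum of R-modules. If N₁ is PSD in M₁ and N₂ is PSD in M₂, then N₁ ⊕ N₂ is PSD in M. -/
open Submodule Function LinearMap

universe u v w x y

/-! Split off the summands one at a time: PSD of `N₁` in `M₁` gives a projective `S₁ ≤ N₁`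
complementing `N₂ ⊔ X`, then PSD of `N₂` in `M₂` gives a projective `S₂ ≤ N₂` complementing
`S₁ ⊔ X`. By modularity of the submodule lattice, `S₂ ⊔ S₁` is then a projective complement
of `X`. -/

theorem Module.Projective.sup_of_disjoint {R : Type u} [Ring R] {M : Type v} [AddCommGroup M]
    [Module R M] {S₁ S₂ : Submodule R M} (h : Disjoint S₁ S₂)
    [Module.Projective R S₁] [Module.Projective R S₂] :
    Module.Projective R ↥(S₁ ⊔ S₂) := by
  have hker : ker (S₁.subtype.coprod S₂.subtype) = ⊥ := by
    rw [ker_coprod_of_disjoint_range _ _ (by simpa using h)]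
    simp
  exact .of_equiv ((LinearEquiv.ofInjective _ (ker_eq_bot.mp hker)).trans
    (LinearEquiv.ofEq _ _ (sup_eq_range S₁ S₂).symm))

theorem PSDIn.exists_projective_sup_eq {R : Type u} [Ring R] {M : Type v} [AddCommGroup M]
    [Module R M] {T N : Submodule R M} (hN : PSDIn R T N) (hNT : N ≤ T) {Y : Submodule R M}
    (hY : T ≤ N ⊔ Y) :
    ∃ S : Submodule R M, Module.Projective R S ∧ S ≤ N ∧ S ⊔ Y = N ⊔ Y ∧ Disjoint S Y := by
  have hsup : N ⊔ Y ⊓ T = T := by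
    rw [← sup_inf_assoc_of_le Y hNT, inf_eq_right.mpr hY]
  obtain ⟨S, hS, hSN, hSsup, hSinf⟩ := hN (Y ⊓ T) inf_le_right hsup
  refine ⟨S, hS, hSN, le_antisymm (sup_le_sup_right hSN Y) ?_, ?_⟩
  · calc N ⊔ Y ≤ T ⊔ Y := sup_le_sup_right hNT Y
      _ = S ⊔ Y := by rw [← hSsup, sup_assoc, sup_eq_right.mpr (inf_le_left : Y ⊓ T ≤ Y)]
  · rw [disjoint_iff, ← inf_eq_left.mpr (hSN.trans hNT), inf_assoc, inf_comm T, hSinf]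

theorem stmt3_general {R : Type u} [Ring R] {M : Type v} [AddCommGroup M] [Module R M]
    (M₁ M₂ N₁ N₂ : Submodule R M)
    (h₁ : N₁ ≤ M₁) (h₂ : N₂ ≤ M₂)
    (p₁ : PSDIn R M₁ N₁) (p₂ : PSDIn R M₂ N₂) :
    PSDIn R ⊤ (N₁ ⊔ N₂) := by
  intro X _ hX
  obtain ⟨S₁, _, hS₁N, hS₁sup, hS₁X⟩ :=
    p₁.exists_projective_sup_eq h₁ (Y := N₂ ⊔ X) (by rw [← sup_assoc, hX]; exact le_top)
  rw [← sup_assoc N₁, hX] at hS₁sup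
  obtain ⟨S₂, _, hS₂N, hS₂sup, hS₂X⟩ :=
    p₂.exists_projective_sup_eq h₂ (Y := S₁ ⊔ X) (by rw [sup_left_comm, hS₁sup]; exact le_top)
  have hS₁X : Disjoint S₁ X := hS₁X.mono_right le_sup_right
  refine ⟨S₂ ⊔ S₁, .sup_of_disjoint (hS₂X.mono_right le_sup_left),
    sup_le (hS₂N.trans le_sup_right) (hS₁N.trans le_sup_left), ?_,
    (hS₁X.disjoint_sup_left_of_disjoint_sup_right hS₂X).eq_bot⟩
  rw [sup_assoc, hS₂sup, sup_left_comm, hS₁sup]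

theorem stmt3 {R : Type u} [Ring R] {M : Type v} [AddCommGroup M] [Module R M]
    (M₁ M₂ N₁ N₂ : Submodule R M) (hM : IsCompl M₁ M₂)
    (h₁ : N₁ ≤ M₁) (h₂ : N₂ ≤ M₂)
    (p₁ : PSDIn R M₁ N₁) (p₂ : PSDIn R M₂ N₂) :
    PSDIn R ⊤ (N₁ ⊔ N₂) :=
  stmt3_general M₁ M₂ N₁ N₂ h₁ h₂ p₁ p₂
end

section
/- If f_i : P_i → M_i (i = 1, ..., n) are projective I-covers, then ⊕f_i : ⊕P_i → ⊕M_i is a projective I-cover. -/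
open Submodule Function LinearMap

universe u v w x y

/-! The kernel of `⊕ fᵢ` is `⊕ ker fᵢ`, so everything reduces to two summands `K₁ ≤ A₁`,
`K₂ ≤ A₂` with `Kᵢ` PSD in `Aᵢ`. Given `K₁ + K₂ + X = A₁ + A₂`, PSD of `K₂` applied to
`(K₁ + X) ∩ A₂` yields a projective `S₂ ≤ K₂` complementing `K₁ + X`, then PSD of `K₁`
applied to `(S₂ + X) ∩ A₁` yields `S₁ ≤ K₁` complementing `S₂ + X`; by the modular law
`S₁ ⊕ S₂ ≤ K₁ + K₂` is a projective complement of `X` in `A₁ + A₂`. -/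

namespace Submodule

variable {R : Type u} [Ring R] {M : Type v} [AddCommGroup M] [Module R M]

theorem projective_sup_of_disjoint {S₁ S₂ : Submodule R M} (hd : Disjoint S₁ S₂)
    [Module.Projective R S₁] [Module.Projective R S₂] : Module.Projective R ↥(S₁ ⊔ S₂) := by
  have hinj : Injective (S₁.subtype.coprod S₂.subtype) := by
    rw [← ker_eq_bot, ker_coprod_of_disjoint_range, ker_subtype, ker_subtype, prod_bot]
    rwa [range_subtype, range_subtype]
  exact .of_equiv <|
    (LinearEquiv.ofInjective _ hinj).trans (LinearEquiv.ofEq _ _ (sup_eq_range S₁ S₂).symm)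

end Submodule

namespace PSDIn

variable {R : Type u} [Ring R] {M : Type v} [AddCommGroup M] [Module R M]

theorem exists_complement {A K Y : Submodule R M} (h : PSDIn R A K) (hKA : K ≤ A)
    (hA : A ≤ K ⊔ Y) :
    ∃ S : Submodule R M, Module.Projective R S ∧ S ≤ K ∧ S ⊔ Y = K ⊔ Y ∧ Disjoint S Y := by
  have hKY : K ⊔ Y ⊓ A = A := by rw [← sup_inf_assoc_of_le Y hKA, inf_eq_right.mpr hA]
  obtain ⟨S, hSp, hSK, hSsup, hSinf⟩ := h (Y ⊓ A) inf_le_right hKY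
  have hSA : S ≤ A := hSK.trans hKA
  have hKS : K ≤ S ⊔ Y := calc
    K ≤ A := hKA
    _ = S ⊔ Y ⊓ A := hSsup.symm
    _ ≤ S ⊔ Y := sup_le_sup_left inf_le_left S
  refine ⟨S, hSp, hSK, le_antisymm (sup_le_sup_right hSK Y) (sup_le hKS le_sup_right), ?_⟩
  rw [disjoint_iff, ← hSinf, inf_comm Y A, ← inf_assoc, inf_eq_left.mpr hSA]

theorem sup {A₁ A₂ K₁ K₂ : Submodule R M} (h₁ : PSDIn R A₁ K₁) (h₂ : PSDIn R A₂ K₂)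
    (hK₁ : K₁ ≤ A₁) (hK₂ : K₂ ≤ A₂) : PSDIn R (A₁ ⊔ A₂) (K₁ ⊔ K₂) := by
  intro X _ hX
  have hKX : K₂ ⊔ (K₁ ⊔ X) = A₁ ⊔ A₂ := by rw [← sup_assoc, sup_comm K₂, hX]
  obtain ⟨S₂, hS₂p, hS₂K, hS₂sup, hS₂X⟩ :=
    h₂.exists_complement (Y := K₁ ⊔ X) hK₂ (hKX ▸ le_sup_right)
  have hSX : K₁ ⊔ (S₂ ⊔ X) = A₁ ⊔ A₂ := by rw [sup_left_comm, hS₂sup, hKX]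
  obtain ⟨S₁, hS₁p, hS₁K, hS₁sup, hS₁X⟩ :=
    h₁.exists_complement (Y := S₂ ⊔ X) hK₁ (hSX ▸ le_sup_left)
  have := Submodule.projective_sup_of_disjoint (hS₁X.mono_right le_sup_left)
  refine ⟨S₁ ⊔ S₂, this, sup_le_sup hS₁K hS₂K, by rw [sup_assoc, hS₁sup, hSX], ?_⟩
  exact disjoint_iff.mp <|
    (hS₂X.mono_right le_sup_right).disjoint_sup_left_of_disjoint_sup_right hS₁X

theorem finset_sup {ι : Type x} {A K : ι → Submodule R M} (h : ∀ i, PSDIn R (A i) (K i))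
    (hKA : ∀ i, K i ≤ A i) (s : Finset ι) : PSDIn R (s.sup A) (s.sup K) := by
  induction s using Finset.cons_induction with
  | empty =>
    intro X hX _
    refine ⟨⊥, inferInstance, le_rfl, ?_, bot_inf_eq X⟩
    rw [Finset.sup_empty, bot_sup_eq, le_bot_iff.mp hX]
  | cons i s hi ih =>
    rw [Finset.sup_cons, Finset.sup_cons]
    exact (h i).sup ih (hKA i) (Finset.sup_mono_fun fun j _ => hKA j)

theorem iSup {ι : Type x} [Finite ι] {A K : ι → Submodule R M} (h : ∀ i, PSDIn R (A i) (K i))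
    (hKA : ∀ i, K i ≤ A i) : PSDIn R (⨆ i, A i) (⨆ i, K i) := by
  cases nonempty_fintype ι
  rw [← Finset.sup_univ_eq_iSup, ← Finset.sup_univ_eq_iSup]
  exact finset_sup h hKA Finset.univ

theorem map {N : Type w} [AddCommGroup N] [Module R N] {T K : Submodule R M}
    (h : PSDIn R T K) (g : M →ₗ[R] N) (hg : Injective g) : PSDIn R (T.map g) (K.map g) := by
  intro X hXT hX
  have hgX : (X.comap g).map g = X :=
    Submodule.map_comap_eq_of_le (hXT.trans LinearMap.map_le_range)
  have hXT' : X.comap g ≤ T := by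
    rw [← Submodule.comap_map_eq_of_injective hg T]
    exact Submodule.comap_mono hXT
  obtain ⟨S, hSp, hSK, hSsup, hSinf⟩ := h (X.comap g) hXT'
    (Submodule.map_injective_of_injective hg (by rw [Submodule.map_sup, hgX, hX]))
  refine ⟨S.map g, .of_equiv (S.equivMapOfInjective g hg), Submodule.map_mono hSK, ?_, ?_⟩
  · rw [← hgX, ← Submodule.map_sup, hSsup]
  · rw [← hgX, ← Submodule.map_inf g hg, hSinf, Submodule.map_bot]

end PSDIn

section Pi

variable {R : Type u} [Ring R] {ι : Type x} [Finite ι] {P : ι → Type v} {M : ι → Type w}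
  [∀ i, AddCommGroup (P i)] [∀ i, Module R (P i)] [∀ i, AddCommGroup (M i)] [∀ i, Module R (M i)]

theorem Module.projective_pi [∀ i, Module.Projective R (P i)] :
    Module.Projective R (∀ i, P i) := by
  classical
  cases nonempty_fintype ι
  exact .of_equiv (DirectSum.linearEquivFunOnFintype R ι P)

theorem LinearMap.ker_pi_comp_proj [DecidableEq ι] (f : ∀ i, P i →ₗ[R] M i) :
    ker (LinearMap.pi fun i => f i ∘ₗ proj i) = ⨆ i, (ker (f i)).map (single R P i) := by
  rw [Submodule.iSup_map_single, ker_pi, ← Submodule.iInf_comap_proj]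
  simp only [ker_comp]

theorem Submodule.iSup_map_single_top [DecidableEq ι] :
    ⨆ i, (⊤ : Submodule R (P i)).map (single R P i) = ⊤ := by
  rw [Submodule.iSup_map_single, Submodule.pi_top]

end Pi

theorem stmt4_general {R : Type u} [Ring R] (I : Ideal R)
    {n : ℕ} (P : Fin n → Type v) (M : Fin n → Type w)
    [∀ i, AddCommGroup (P i)] [∀ i, Module R (P i)]
    [∀ i, AddCommGroup (M i)] [∀ i, Module R (M i)]
    (f : ∀ i, P i →ₗ[R] M i) (hf : ∀ i, IsProjICover R I (f i)) :
    IsProjICover R I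
      (LinearMap.pi (fun i => (f i) ∘ₗ (LinearMap.proj i)) :
        (∀ i, P i) →ₗ[R] ∀ i, M i) := by
  simp only [IsProjICover, forall_and] at hf
  obtain ⟨hsurj, hproj, hkerI, hpsd⟩ := hf
  refine ⟨Surjective.piMap hsurj, Module.projective_pi, ?_, ?_⟩
  · rw [ker_pi_comp_proj]
    refine iSup_le fun i => (Submodule.map_mono (hkerI i)).trans ?_
    rw [Submodule.map_smul'']
    exact smul_mono_right I le_top
  · rw [ker_pi_comp_proj, ← Submodule.iSup_map_single_top]
    exact PSDIn.iSup (fun i => (hpsd i).map _ (Pi.single_injective i))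
      fun i => Submodule.map_mono le_top

theorem stmt4 {R : Type u} [Ring R] (I : Ideal R) (hI : IsTwoSidedI R I)
    {n : ℕ} (P : Fin n → Type v) (M : Fin n → Type w)
    [∀ i, AddCommGroup (P i)] [∀ i, Module R (P i)]
    [∀ i, AddCommGroup (M i)] [∀ i, Module R (M i)]
    (f : ∀ i, P i →ₗ[R] M i) (hf : ∀ i, IsProjICover R I (f i)) :
    IsProjICover R I
      (LinearMap.pi (fun i => (f i) ∘ₗ (LinearMap.proj i)) :
        (∀ i, P i) →ₗ[R] ∀ i, M i) :=
  stmt4_general I P M f hf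
end

section
/- A projective left R-module M is a J(R)-supplemented module if and only if M is a supplemented module. -/
/-!
Two facts about a projective module `P` carry the proof: its radical lies in `J(R) P`, so every
small submodule of `P` does; and `J(R) P = P` forces `P = 0` (Bass), by Nakayama's lemma for the
finitely generated right ideal spanned by the coordinates of an element of `P`.

If `Y` is a projective `J(R)`-supplement of `X`, the DM property supplies a direct summand
`S ≤ X ∩ Y` of `Y`; it is projective and lies in `J(R) S`, hence is zero, so `X ∩ Y` is small
in `Y`. Conversely, let `V` be a supplement of `X` in the projective supplemented module `M`.
Projecting a supplement of `V` into `X` along `V` gives a mutual supplement `U ≤ X` of `V`, and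
mutual supplements in a projective module are complements. So `V` is a projective summand and
`X ∩ V`, being small in `V`, lies in `J(R) V`; its DM property is trivial.
-/

open Submodule Function LinearMap

universe u v w x y

section Jacobson

variable {R : Type u} [Ring R]

theorem isUnit_one_add_of_mem_jacobson {a : R} (ha : a ∈ Ring.jacobson R) : IsUnit (1 + a) := by
  rw [← Ideal.jacobson_bot] at ha
  obtain ⟨b, hb⟩ := Ideal.exists_mul_add_sub_mem_of_mem_jacobson a ha
  rw [Ideal.mem_bot, sub_eq_zero, add_comm] at hb
  -- `b = 1 - b * a` again lies in `1 + J`, so it has a left inverse `c` as well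
  obtain ⟨c, hc⟩ := Ideal.exists_mul_add_sub_mem_of_mem_jacobson (-(b * a))
    (neg_mem (Ideal.mul_mem_left _ b ha))
  have hba : -(b * a) + 1 = b := by rw [← hb]; noncomm_ring
  rw [Ideal.mem_bot, sub_eq_zero, hba] at hc
  have hca : c = 1 + a := by
    calc c = c * (b * (1 + a)) := by rw [hb, mul_one]
    _ = 1 + a := by rw [← mul_assoc, hc, one_mul]
  exact ⟨⟨1 + a, b, hca ▸ hc, hb⟩, rfl⟩

theorem MulOpposite.op_mem_jacobson {a : R} (ha : a ∈ Ring.jacobson R) :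
    MulOpposite.op a ∈ Ring.jacobson Rᵐᵒᵖ := by
  rw [← Ideal.jacobson_bot, Ideal.mem_jacobson_iff]
  intro y
  obtain ⟨u, hu⟩ := isUnit_one_add_of_mem_jacobson (Ideal.mul_mem_right y.unop _ ha)
  refine ⟨MulOpposite.op (u⁻¹ : Rˣ), ?_⟩
  rw [Ideal.mem_bot, sub_eq_zero]
  apply MulOpposite.unop_injective
  simp only [MulOpposite.unop_add, MulOpposite.unop_mul, MulOpposite.unop_op,
    MulOpposite.unop_one]
  rw [← mul_assoc, ← add_one_mul, add_comm, ← hu, Units.mul_inv]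

theorem Finsupp.eq_zero_of_forall_eq_sum_mul_jacobson {ι : Type*}
    (a : ι →₀ R) (c : ι → ι → R) (hc : ∀ i j, c i j ∈ Ring.jacobson R)
    (ha : ∀ i, a i = a.sum fun j r => r * c j i) : a = 0 := by
  set N : Submodule Rᵐᵒᵖ R := span Rᵐᵒᵖ (a '' a.support)
  have hN : N ≤ Ring.jacobson Rᵐᵒᵖ • N := by
    rw [span_le]
    rintro _ ⟨i, -, rfl⟩
    rw [ha i]
    refine Submodule.finsuppSum_mem _ _ _ _ fun j hj => ?_
    rw [← op_smul_eq_mul]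
    exact smul_mem_smul (MulOpposite.op_mem_jacobson (hc j i))
      (subset_span ⟨j, Finsupp.mem_support_iff.mpr hj, rfl⟩)
  have hN_bot : N = ⊥ :=
    Submodule.FG.eq_bot_of_le_jacobson_smul (fg_span (a.support.finite_toSet.image a)) hN
  refine Finsupp.support_eq_empty.mp (Finset.eq_empty_of_forall_notMem fun i hi =>
    Finsupp.mem_support_iff.mp hi ?_)
  have hai : a i ∈ N := subset_span ⟨i, hi, rfl⟩
  rwa [hN_bot, mem_bot] at hai

end Jacobson

section Projective

variable {R : Type u} [Ring R] {P : Type w} [AddCommGroup P] [Module R P]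

theorem Module.Projective.jacobson_le_jacobson_smul_top [Module.Projective R P] :
    Module.jacobson R P ≤ Ring.jacobson R • ⊤ := by
  obtain ⟨s, hs⟩ := Module.projective_def.mp ‹_›
  intro x hx
  rw [← hs x, Finsupp.linearCombination_apply]
  exact Submodule.finsuppSum_mem _ _ _ _ fun j _ =>
    smul_mem_smul (Module.le_comap_jacobson (Finsupp.lapply j ∘ₗ s) hx) mem_top

theorem Module.Projective.subsingleton_of_jacobson_eq_top [Module.Projective R P]
    (h : Module.jacobson R P = ⊤) : Subsingleton P := by
  obtain ⟨s, hs⟩ := Module.projective_def.mp ‹_›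
  have hcoord : ∀ y j : P, s y j ∈ Ring.jacobson R := fun y j =>
    Module.le_comap_jacobson (Finsupp.lapply j ∘ₗ s) (h ▸ mem_top : y ∈ Module.jacobson R P)
  refine subsingleton_of_forall_eq 0 fun x => ?_
  have hsx : s x = 0 := by
    refine Finsupp.eq_zero_of_forall_eq_sum_mul_jacobson (s x) (fun j i => s j i) hcoord
      fun i => ?_
    conv_lhs => rw [← hs x]
    simp [Finsupp.linearCombination_apply, map_finsuppSum, Finsupp.sum_apply]
  rw [← hs x, hsx, map_zero]

theorem Module.Projective.of_isCompl [Module.Projective R P] {p q : Submodule R P}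
    (h : IsCompl p q) : Module.Projective R p :=
  .of_split p.subtype (p.projectionOnto q h) (by ext; simp)

variable {M : Type v} [AddCommGroup M] [Module R M]

theorem Module.Projective.of_disjoint_of_sup_eq {S S' Y : Submodule R M} [Module.Projective R Y]
    (hY : S ⊔ S' = Y) (hSS' : Disjoint S S') : Module.Projective R S := by
  have hS : S ≤ Y := hY ▸ le_sup_left
  have hS' : S' ≤ Y := hY ▸ le_sup_right
  have hcompl : IsCompl (S.comap Y.subtype) (S'.comap Y.subtype) := by
    constructor
    · rw [disjoint_iff, ← comap_inf, hSS'.eq_bot, comap_bot, ker_subtype]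
    · rw [codisjoint_iff, ← (map_injective_of_injective Y.injective_subtype).eq_iff,
        Submodule.map_sup, map_comap_subtype, map_comap_subtype, map_subtype_top,
        inf_eq_right.mpr hS, inf_eq_right.mpr hS', hY]
  have := Module.Projective.of_isCompl hcompl
  exact .of_equiv' (comapSubtypeEquivOfLe hS)

theorem Submodule.eq_bot_of_le_jacobson_smul_of_projective {N : Submodule R M}
    [Module.Projective R N] (h : N ≤ Ring.jacobson R • N) : N = ⊥ := by
  have hN : Module.jacobson R N = ⊤ := by
    refine eq_top_iff.mpr (le_trans ?_ (Ring.jacobson_smul_top_le R N))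
    rwa [← map_le_map_iff_of_injective N.injective_subtype, map_smul'', map_subtype_top]
  have := Module.Projective.subsingleton_of_jacobson_eq_top hN
  exact eq_bot_of_subsingleton

end Projective

section Supplement

variable {R : Type u} [Ring R] {M : Type v} [AddCommGroup M] [Module R M]

theorem SmallIn.of_le {T S S' : Submodule R M} (h : SmallIn R T S) (hST : S ≤ T)
    (hS' : S' ≤ S) : SmallIn R T S' := fun X hX hS'X =>
  h X hX (le_antisymm (sup_le hST hX) (hS'X ▸ sup_le_sup_right hS' X))

theorem SmallIn.dmIn {T K : Submodule R M} (h : SmallIn R T K) : DMIn R T K := fun X hX hKX =>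
  ⟨⊥, bot_le, ⟨T, bot_sup_eq T, bot_inf_eq T⟩, (bot_sup_eq X).trans (h X hX hKX)⟩

theorem SmallIn.comap_subtype_le_jacobson {V K : Submodule R M} (h : SmallIn R V K) (hK : K ≤ V) :
    K.comap V.subtype ≤ Module.jacobson R V := by
  refine le_sInf fun m hm => by_contra fun hKm => hm.1 ?_
  have hsup : K.comap V.subtype ⊔ m = ⊤ :=
    hm.2 _ (lt_of_le_of_ne le_sup_right fun h' => hKm (h' ▸ le_sup_left))
  rw [← (map_injective_of_injective V.injective_subtype).eq_iff, map_subtype_top]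
  refine h _ (map_subtype_le V m) ?_
  have := congrArg (map V.subtype) hsup
  rwa [Submodule.map_sup, map_comap_subtype, inf_eq_right.mpr hK, map_subtype_top] at this

theorem SmallIn.le_jacobson_smul {V K : Submodule R M} [Module.Projective R V]
    (h : SmallIn R V K) (hK : K ≤ V) : K ≤ Ring.jacobson R • V :=
  calc K = (K.comap V.subtype).map V.subtype := by rw [map_comap_subtype, inf_eq_right.mpr hK]
    _ ≤ (Ring.jacobson R • ⊤ : Submodule R V).map V.subtype :=
      map_mono ((h.comap_subtype_le_jacobson hK).trans
        Module.Projective.jacobson_le_jacobson_smul_top)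
    _ = Ring.jacobson R • V := by rw [map_smul'', map_subtype_top]

theorem Submodule.inf_smul_sup_eq_smul_of_disjoint (I : Ideal R) {S S' : Submodule R M}
    (h : Disjoint S S') : S ⊓ I • (S ⊔ S') = I • S := by
  rw [smul_sup, inf_comm, sup_inf_assoc_of_le _ smul_le_right,
    (h.symm.mono_left smul_le_right).eq_bot, sup_bot_eq]

theorem DMIn.smallIn_of_le_jacobson_smul {Y K : Submodule R M} [Module.Projective R Y]
    (hDM : DMIn R Y K) (hK : K ≤ Ring.jacobson R • Y) : SmallIn R Y K := by
  intro Z hZ hKZ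
  obtain ⟨S, hSK, ⟨S', hY, hSS'⟩, hSZ⟩ := hDM Z hZ hKZ
  have hdisj : Disjoint S S' := disjoint_iff.mpr hSS'
  have := Module.Projective.of_disjoint_of_sup_eq hY hdisj
  have hS : S ≤ Ring.jacobson R • S := by
    rw [← inf_smul_sup_eq_smul_of_disjoint _ hdisj, hY]
    exact le_inf le_rfl (hSK.trans hK)
  rwa [eq_bot_of_le_jacobson_smul_of_projective hS, bot_sup_eq] at hSZ

theorem Module.Projective.exists_add_eq_self_of_sup_eq_top [Module.Projective R M]
    {U V : Submodule R M} (h : U ⊔ V = ⊤) :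
    ∃ f g : M →ₗ[R] M, (∀ m, f m + g m = m) ∧ range f ≤ U ∧ range g ≤ V := by
  obtain ⟨l, hl⟩ := (U.subtype.coprod V.subtype).exists_rightInverse_of_surjective
    (by rw [range_coprod, range_subtype, range_subtype, h])
  refine ⟨U.subtype ∘ₗ fst R U V ∘ₗ l, V.subtype ∘ₗ snd R U V ∘ₗ l, ?_, ?_, ?_⟩
  · intro m
    simpa using LinearMap.congr_fun hl m
  · exact (range_comp_le_range _ _).trans (range_subtype U).le
  · exact (range_comp_le_range _ _).trans (range_subtype V).le

/-- `Y` is a supplement of `X` in `M`. -/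
def IsSupplement (X Y : Submodule R M) : Prop :=
  X ⊔ Y = ⊤ ∧ SmallIn R Y (X ⊓ Y)

theorem IsSupplement.map {A B : Submodule R M} (h : IsSupplement A B) {f g : M →ₗ[R] M}
    (hfg : ∀ m, f m + g m = m) (hf : range f ≤ A) : IsSupplement A (B.map g) := by
  have hA : ∀ m, m - g m ∈ A := fun m => eq_sub_of_add_eq (hfg m) ▸ hf ⟨m, rfl⟩
  have hB : B ≤ A ⊔ B.map g := fun b hb => by
    rw [← sub_add_cancel b (g b)]
    exact add_mem_sup (hA b) (mem_map_of_mem hb)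
  refine ⟨eq_top_iff.mpr (h.1 ▸ sup_le le_sup_left hB), fun Z hZ hZeq => ?_⟩
  have hBZ : (A ⊓ B) ⊔ (B ⊓ Z.comap g) = B := by
    refine le_antisymm (sup_le inf_le_right inf_le_left) fun b hb => ?_
    obtain ⟨a, ha, z, hz, haz⟩ :=
      mem_sup.mp (hZeq.symm ▸ mem_map_of_mem hb : g b ∈ A ⊓ B.map g ⊔ Z)
    obtain ⟨b', hb', rfl⟩ := hZ hz
    have hbb' : b - b' ∈ A := by
      have := add_mem (hA (b - b')) ha.1
      rwa [map_sub, ← haz, add_sub_cancel_right, sub_add_cancel] at this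
    rw [← sub_add_cancel b b']
    exact add_mem_sup ⟨hbb', sub_mem hb hb'⟩ ⟨hb', hz⟩
  exact le_antisymm hZ
    (map_le_iff_le_comap.mpr ((h.2 _ inf_le_left hBZ).symm.le.trans inf_le_right))

theorem IsSupplement.ker_eq {U V : Submodule R M} (hUV : IsSupplement U V)
    (hVU : IsSupplement V U) {f g : M →ₗ[R] M} (hfg : ∀ m, f m + g m = m) (hf : range f ≤ U)
    (hg : range g ≤ V) : ker g = U := by
  have hgV_le : V.map g ≤ V := map_le_iff_le_comap.mpr fun v _ => hg ⟨v, rfl⟩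
  have hgV : V.map g = V := by
    refine hUV.2 _ hgV_le (le_antisymm (sup_le inf_le_right hgV_le) fun v hv => ?_)
    have hfv : f v ∈ V := by
      rw [eq_sub_of_add_eq (hfg v)]
      exact sub_mem hv (hg ⟨v, rfl⟩)
    rw [← hfg v]
    exact add_mem_sup ⟨hf ⟨v, rfl⟩, hfv⟩ (mem_map_of_mem hv)
  have hkerV : ker g ⊔ V = ⊤ := by
    refine eq_top_iff.mpr fun m _ => ?_
    obtain ⟨v, hv, hgv⟩ := (hgV.symm ▸ hg ⟨m, rfl⟩ : g m ∈ V.map g)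
    rw [← sub_add_cancel m v]
    exact add_mem_sup (by rw [mem_ker, map_sub, hgv, sub_self]) hv
  have hkerU : ker g ≤ U := fun m hm => by
    rw [← hfg m, mem_ker.mp hm, add_zero]
    exact hf ⟨m, rfl⟩
  refine hVU.2 _ hkerU ?_
  rw [sup_comm, ← sup_inf_assoc_of_le V hkerU, hkerV, top_inf_eq]

theorem IsSupplement.inf_eq_bot [Module.Projective R M] {U V : Submodule R M}
    (hUV : IsSupplement U V) (hVU : IsSupplement V U) : U ⊓ V = ⊥ := by
  obtain ⟨f, g, hfg, hf, hg⟩ := Module.Projective.exists_add_eq_self_of_sup_eq_top hUV.1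
  have hkg := hUV.ker_eq hVU hfg hf hg
  have hkf := hVU.ker_eq hUV (fun m => (add_comm _ _).trans (hfg m)) hg hf
  refine eq_bot_iff.mpr fun k hk => ?_
  rw [mem_bot, ← hfg k, mem_ker.mp (hkf ▸ hk.2), mem_ker.mp (hkg ▸ hk.1), add_zero]

theorem IsSupplement.projective [Module.Projective R M] (hM : Supplemented R M)
    {X V : Submodule R M} (h : IsSupplement X V) : Module.Projective R V := by
  obtain ⟨f, g, hfg, hf, hg⟩ :=
    Module.Projective.exists_add_eq_self_of_sup_eq_top (sup_comm X V ▸ h.1)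
  obtain ⟨B, hB⟩ : ∃ B, IsSupplement V B := hM V
  have hU : IsSupplement V (B.map g) := hB.map hfg hf
  have hUX : B.map g ≤ X := map_le_iff_le_comap.mpr fun b _ => hg ⟨b, rfl⟩
  have hUV : IsSupplement (B.map g) V :=
    ⟨sup_comm V _ ▸ hU.1, h.2.of_le inf_le_right (inf_le_inf_right V hUX)⟩
  exact Module.Projective.of_isCompl
    ⟨disjoint_iff.mpr (inf_comm (B.map g) V ▸ hUV.inf_eq_bot hU), codisjoint_iff.mpr hU.1⟩

end Supplement

theorem stmt14 {R : Type u} [Ring R] {M : Type v} [AddCommGroup M] [Module R M]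
    [Module.Projective R M] :
    ISupplemented R (Ideal.jacobson (⊥ : Ideal R)) M ↔ Supplemented R M := by
  rw [Ideal.jacobson_bot]
  constructor
  · intro h X
    obtain ⟨Y, hY, hXY, hJ, hDM⟩ := h X
    exact ⟨Y, hXY, hDM.smallIn_of_le_jacobson_smul hJ⟩
  · intro h X
    obtain ⟨V, hV⟩ : ∃ V, IsSupplement X V := h X
    have := hV.projective h
    exact ⟨V, this, hV.1, hV.2.le_jacobson_smul inf_le_right, hV.2.dmIn⟩
end

section
/- Let R be a left DM ring for an ideal I. Then R is I-semiperfect if and only if the left R-module R is an I-supplemented module. -/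
open Submodule Function LinearMap

universe u v w x y

/-!
If `M = A ⊕ B` with `A ≤ X` and `X ∩ B ≤ IM`, then `B` is already an `I`-supplement of `X`: for a
summand, `IM ∩ B = IB`, and the DM property of `X ∩ B` passes from `M` to `B`. Conversely, if `Y`
is an `I`-supplement of `K` in a projective `M`, lift `M → M/K` through `Y → M/K` to `f : M → Y`;
the DM property of `K ∩ Y` in `Y` applied to `(K ∩ Y) + f(M) = Y` yields a summand `S ≤ K ∩ Y` of
`Y` with `S + f(M) = Y`. Then `M → Y → Y/S` is a surjection onto a projective module whose kernel
lies in `K` and which maps `K` into `I(Y/S)`, so it splits as `M = ker ⊕ B` with `K ∩ B ≤ IM`.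
For `M = R` this is the theorem, since `IR = I` for a two-sided `I`.
-/

namespace Submodule

variable {R : Type u} [Ring R] {M : Type v} [AddCommGroup M] [Module R M]

theorem projective_of_isCompl [Module.Projective R M] {A B : Submodule R M} (h : IsCompl A B) :
    Module.Projective R A :=
  Module.Projective.of_split A.subtype (A.projectionOnto B h)
    (LinearMap.ext fun x => A.projectionOnto_apply_left h x)

theorem smul_top_inf_le_smul_of_isCompl (I : Ideal R) {A B : Submodule R M} (h : IsCompl A B) :
    I • ⊤ ⊓ B ≤ I • B := by
  rintro x ⟨hxI, hxB⟩
  have hproj : B.projectionOnto A h.symm x = ⟨x, hxB⟩ :=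
    projectionOnto_apply_left h.symm ⟨x, hxB⟩
  have hmem := smul_top_le_comap_smul_top I (B.projectionOnto A h.symm) hxI
  rw [mem_comap, hproj] at hmem
  exact (mem_smul_top_iff I B _).1 hmem

theorem isCompl_comap_subtype_of_sup_eq_of_inf_eq_bot {T S S' : Submodule R M}
    (hsup : S ⊔ S' = T) (hinf : S ⊓ S' = ⊥) :
    IsCompl (S.comap T.subtype) (S'.comap T.subtype) := by
  constructor
  · rw [disjoint_iff, ← comap_inf, hinf, comap_bot, ker_subtype]
  · subst hsup
    rw [codisjoint_iff]
    apply map_injective_of_injective (S ⊔ S').injective_subtype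
    rw [map_sup, map_comap_subtype, map_comap_subtype, inf_eq_right.2 le_sup_left,
      inf_eq_right.2 le_sup_right, map_top, range_subtype]

theorem isCompl_ker_range_of_comp_eq_id {P : Type*} [AddCommGroup P] [Module R P]
    {g : M →ₗ[R] P} {s : P →ₗ[R] M} (hgs : g ∘ₗ s = LinearMap.id) :
    IsCompl (ker g) (range s) := by
  have hgs' (p : P) : g (s p) = p := LinearMap.congr_fun hgs p
  constructor
  · rw [disjoint_def]
    rintro _ hker ⟨p, rfl⟩
    rw [mem_ker, hgs'] at hker
    simp [hker]
  · rw [codisjoint_iff, eq_top_iff]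
    intro m _
    refine mem_sup.2 ⟨m - s (g m), ?_, s (g m), ⟨g m, rfl⟩, sub_add_cancel m _⟩
    rw [mem_ker, map_sub, hgs', sub_self]

theorem exists_lift_of_sup_eq_top [Module.Projective R M] {K Y : Submodule R M}
    (hKY : K ⊔ Y = ⊤) : ∃ f : M →ₗ[R] Y, ∀ m, (f m : M) - m ∈ K := by
  have hsurj : Surjective (K.mkQ ∘ₗ Y.subtype) := by
    rwa [← range_eq_top, range_comp, range_subtype, map_mkQ_eq_top]
  obtain ⟨f, hf⟩ := Module.projective_lifting_property _ K.mkQ hsurj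
  refine ⟨f, fun m => ?_⟩
  rw [← Quotient.eq, ← mkQ_apply, ← mkQ_apply]
  exact LinearMap.congr_fun hf m

theorem inf_sup_range_eq_of_sub_mem {K Y : Submodule R M} {f : M →ₗ[R] Y}
    (hf : ∀ m, (f m : M) - m ∈ K) : K ⊓ Y ⊔ range (Y.subtype ∘ₗ f) = Y := by
  refine le_antisymm (sup_le inf_le_right ?_) fun y hy => ?_
  · rintro _ ⟨m, rfl⟩
    exact (f m).2
  · refine mem_sup.2 ⟨y - f y, ⟨?_, sub_mem hy (f y).2⟩, f y, ⟨y, rfl⟩, sub_add_cancel y _⟩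
    simpa using neg_mem (hf y)

theorem exists_isCompl_of_surjective [Module.Projective R M] {P : Type*} [AddCommGroup P]
    [Module R P] [Module.Projective R P] (I : Ideal R) {K : Submodule R M} {g : M →ₗ[R] P}
    (hg : Surjective g) (hker : ker g ≤ K) (hK : K ≤ comap g (I • ⊤)) :
    ∃ A B : Submodule R M, IsCompl A B ∧ Module.Projective R A ∧ A ≤ K ∧ K ⊓ B ≤ I • ⊤ := by
  obtain ⟨s, hs⟩ := Module.projective_lifting_property g LinearMap.id hg
  have hc := isCompl_ker_range_of_comp_eq_id hs
  refine ⟨ker g, range s, hc, projective_of_isCompl hc, hker, ?_⟩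
  rintro _ ⟨hbK, p, rfl⟩
  have hp : p ∈ (I • ⊤ : Submodule R P) := by
    simpa only [mem_comap, ← LinearMap.comp_apply, hs, LinearMap.id_apply] using hK hbK
  exact smul_top_le_comap_smul_top I s hp

theorem exists_isCompl_of_iSupplement [Module.Projective R M] (I : Ideal R)
    {K Y : Submodule R M} (hY : Module.Projective R Y) (hKY : K ⊔ Y = ⊤) (hKYI : K ⊓ Y ≤ I • Y)
    (hDM : DMIn R Y (K ⊓ Y)) :
    ∃ A B : Submodule R M, IsCompl A B ∧ Module.Projective R A ∧ A ≤ K ∧ K ⊓ B ≤ I • ⊤ := by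
  obtain ⟨f, hf⟩ := exists_lift_of_sup_eq_top hKY
  have hfK {m : M} (hm : m ∈ K) : (f m : M) ∈ K := by simpa using add_mem (hf m) hm
  have hcover := inf_sup_range_eq_of_sub_mem hf
  obtain ⟨S, hSK, ⟨S', hsup, hinf⟩, hSf⟩ := hDM _ (le_sup_right.trans hcover.le) hcover
  have hc := isCompl_comap_subtype_of_sup_eq_of_inf_eq_bot hsup hinf
  have : Module.Projective R (Y ⧸ S.comap Y.subtype) :=
    have := projective_of_isCompl hc.symm
    .of_equiv' (quotientEquivOfIsCompl _ _ hc).symm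
  refine exists_isCompl_of_surjective I (g := (S.comap Y.subtype).mkQ ∘ₗ f) ?_ ?_ ?_
  · rw [← range_eq_top, range_comp, map_mkQ_eq_top]
    apply map_injective_of_injective Y.injective_subtype
    rw [map_sup, map_comap_subtype, inf_eq_right.2 (hSK.trans inf_le_right), ← range_comp, hSf,
      map_top, range_subtype]
  · intro a ha
    have hfa : (f a : M) ∈ S := by simpa using ha
    simpa using sub_mem (hSK hfa).1 (hf a)
  · intro b hb
    have hfb : f b ∈ (I • ⊤ : Submodule R Y) := (mem_smul_top_iff I Y _).2 (hKYI ⟨hfK hb, (f b).2⟩)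
    exact smul_top_le_comap_smul_top I (S.comap Y.subtype).mkQ hfb

end Submodule

section Module

variable {R : Type u} [Ring R] {M : Type v} [AddCommGroup M] [Module R M]

theorem DMIn.of_isCompl {K A B : Submodule R M} (hK : DMIn R ⊤ K) (hKB : K ≤ B)
    (hAB : IsCompl A B) : DMIn R B K := by
  intro W hWB hKW
  have hKWA : K ⊔ (W ⊔ A) = ⊤ := by rw [← sup_assoc, hKW, sup_comm, hAB.sup_eq_top]
  obtain ⟨S, hSK, ⟨S', hSS', hSS'bot⟩, hSWA⟩ := hK _ le_top hKWA
  have hSB : S ≤ B := hSK.trans hKB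
  refine ⟨S, hSK, ⟨S' ⊓ B, ?_, ?_⟩, ?_⟩
  · rw [← sup_inf_assoc_of_le S' hSB, hSS', top_inf_eq]
  · exact eq_bot_iff.2 (hSS'bot ▸ inf_le_inf_left S inf_le_left)
  · rw [← sup_bot_eq (S ⊔ W), ← hAB.inf_eq_bot, ← sup_inf_assoc_of_le A (sup_le hSB hWB),
      sup_assoc, hSWA, top_inf_eq]

theorem ISemiperfectMod.iSupplemented [Module.Projective R M] {I : Ideal R}
    (hDM : DMFor R I M) (h : ISemiperfectMod R I M) : ISupplemented R I M := by
  intro X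
  obtain ⟨A, B, hAB, -, hAX, hXB⟩ := h X
  refine ⟨B, projective_of_isCompl hAB.symm, ?_, ?_, (hDM _ hXB).of_isCompl inf_le_right hAB⟩
  · exact top_unique (hAB.sup_eq_top ▸ sup_le_sup_right hAX B)
  · exact (le_inf hXB inf_le_right).trans (smul_top_inf_le_smul_of_isCompl I hAB)

theorem ISupplemented.iSemiperfectMod [Module.Projective R M] {I : Ideal R}
    (h : ISupplemented R I M) : ISemiperfectMod R I M := fun K => by
  obtain ⟨Y, hY, hKY, hKYI, hDM⟩ := h K
  exact exists_isCompl_of_iSupplement I hY hKY hKYI hDM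

end Module

theorem iSemiperfect_iff_iSemiperfectMod {R : Type u} [Ring R] {I : Ideal R}
    (hI : IsTwoSidedI R I) : ISemiperfect R I ↔ ISemiperfectMod R I R := by
  have : I.IsTwoSided := ⟨fun b ha => hI _ b ha⟩
  have hItop : I • (⊤ : Submodule R R) = I := I.mul_top
  rw [ISemiperfectMod, hItop, ISemiperfect]

theorem stmt17 {R : Type u} [Ring R] (I : Ideal R) (hI : IsTwoSidedI R I)
    (hDM : DMRing R I) :
    ISemiperfect R I ↔ ISupplemented R I R := by
  rw [iSemiperfect_iff_iSemiperfectMod hI]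
  exact ⟨fun h => h.iSupplemented (hDM R), ISupplemented.iSemiperfectMod⟩
end
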